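/- For n ≡ 3 (mod 4), let H_n = {e_i, ē_i : 0 ≤ i ≤ n} ⊂ (Z₂)ⁿ, where e_0 = 0, ē_0 = (1,...,1), e_i is the i-th standard basis vector and ē_i its complement. Then H_n has exactly ρ(2ⁿ) = 2n+2 elements, and for any two distinct y, t ∈ H_n the Hamming weight of y + t is not divisible by 4 (i.e. α_O(y+t) = 1). -/
import Mathlib


/-- Hamming weight of x ∈ (Z₂)ⁿ. -/
def wt {n : ℕ} (x : Fin n → ZMod 2) : ℕ :=
  (Finset.univ.filter (fun i => x i = 1)).card

lemma wt_zero (n : ℕ) : wt (0 : Fin n → ZMod 2) = 0 := by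
  simp [wt]

lemma wt_ones (n : ℕ) : wt (fun _ : Fin n => (1 : ZMod 2)) = n := by
  simp [wt]

lemma wt_single {n : ℕ} (i : Fin n) : wt (Pi.single i (1 : ZMod 2)) = 1 := by
  have h : (Finset.univ.filter fun j => (Pi.single i 1 : Fin n → ZMod 2) j = 1) = {i} := by
    ext j
    simp only [Finset.mem_filter, Finset.mem_univ, true_and, Finset.mem_singleton,
      Pi.single_apply]
    rcases eq_or_ne j i with h | h <;> simp [h]
  simp [wt, h]

lemma wt_pair {n : ℕ} {i j : Fin n} (hij : i ≠ j) :
    wt ((Pi.single i 1 : Fin n → ZMod 2) + Pi.single j 1) = 2 := by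
  rw [wt]
  simp only [Pi.add_apply]
  have h : (Finset.univ.filter fun k : Fin n =>
      (Pi.single i 1 : Fin n → ZMod 2) k + (Pi.single j 1 : Fin n → ZMod 2) k = 1) = {i, j} := by
    ext k
    simp only [Finset.mem_filter, Finset.mem_univ, true_and, Finset.mem_insert,
      Finset.mem_singleton, Pi.single_apply]
    rcases eq_or_ne k i with rfl | h1 <;> rcases eq_or_ne k j with rfl | h2
    · exact absurd rfl hij
    · simp [h2]
    · simp [h1]
    · simp [h1, h2]
  rw [h, Finset.card_insert_of_notMem (by simpa using hij), Finset.card_singleton]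

lemma wt_compl {n : ℕ} (v : Fin n → ZMod 2) :
    wt ((fun _ : Fin n => (1 : ZMod 2)) + v) = n - wt v := by
  have h1 : (Finset.univ.filter fun i => ((fun _ : Fin n => (1:ZMod 2)) + v) i = 1)
      = Finset.univ.filter fun i => ¬ (v i = 1) := by
    apply Finset.filter_congr
    intro i _
    have h : ∀ a : ZMod 2, (1 + a = 1 ↔ ¬ a = 1) := by decide
    simpa using h (v i)
  rw [wt, h1, Finset.filter_not, Finset.card_sdiff_of_subset (Finset.filter_subset _ _)]
  simp [wt]

/-- For n ≡ 3 (mod 4), the Hurwitz-Radon set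
    Hₙ = {e_i, ē_i : 0 ≤ i ≤ n} (e_0 = 0, ē_0 = (1,…,1), e_i the standard basis
    vectors, ē_i their complements) has ρ(2ⁿ) = 2n+2 elements, and the Hamming
    weight of y + t is not divisible by 4 for any two distinct y, t ∈ Hₙ. -/
theorem stmt_18 (n : ℕ) (hn : n % 4 = 3) :
    let z : Fin n → ZMod 2 := fun _ => 1
    let e : Fin n → (Fin n → ZMod 2) := fun i => Pi.single i 1
    let H : Finset (Fin n → ZMod 2) :=
      ({0, z} : Finset (Fin n → ZMod 2))
        ∪ Finset.image e Finset.univ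
        ∪ Finset.image (fun i => z + e i) Finset.univ
    H.card = 2 * n + 2 ∧
    ∀ y ∈ H, ∀ t ∈ H, y ≠ t → wt (y + t) % 4 ≠ 0 := by
  intro z e H
  have hn3 : 3 ≤ n := by omega
  -- weight facts
  have hwz : wt z = n := wt_ones n
  have hwe : ∀ i, wt (e i) = 1 := fun i => wt_single i
  have hwp : ∀ i j : Fin n, i ≠ j → wt (e i + e j) = 2 := fun i j h => wt_pair h
  have hcompl : ∀ v, wt (z + v) = n - wt v := fun v => wt_compl v
  -- algebraic facts
  have hzz : z + z = 0 := by funext k; show (1 : ZMod 2) + 1 = 0; decide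
  have hee : ∀ i, e i + e i = 0 := by
    intro i; funext k
    simp only [Pi.add_apply, Pi.zero_apply]
    exact (by decide : ∀ a : ZMod 2, a + a = 0) _
  have he_inj : Function.Injective e := by
    intro i j h
    by_contra hij
    have h2 := congrFun h i
    simp [e, Pi.single_apply, hij] at h2
  have hez : ∀ i, e i ≠ z := by
    intro i h
    have : wt (e i) = wt z := by rw [h]
    rw [hwe, hwz] at this; omega
  have he0 : ∀ i, e i ≠ 0 := by
    intro i h
    have : wt (e i) = wt (0 : Fin n → ZMod 2) := by rw [h]
    rw [hwe, wt_zero] at this; omega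
  -- cardinality
  have hcard : H.card = 2 * n + 2 := by
    have hA : ({0, z} : Finset (Fin n → ZMod 2)).card = 2 := by
      rw [Finset.card_insert_of_notMem, Finset.card_singleton]
      simp only [Finset.mem_singleton]
      intro h
      have : wt (0 : Fin n → ZMod 2) = wt z := by rw [h]
      rw [wt_zero, hwz] at this; omega
    have hB : (Finset.image e Finset.univ).card = n := by
      rw [Finset.card_image_of_injective _ he_inj, Finset.card_univ, Fintype.card_fin]
    have hC : (Finset.image (fun i => z + e i) Finset.univ).card = n := by
      have : Function.Injective (fun i => z + e i) := fun i j h =>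
        he_inj (by simpa using add_left_cancel h)
      rw [Finset.card_image_of_injective _ this, Finset.card_univ, Fintype.card_fin]
    have hd1 : Disjoint ({0, z} : Finset (Fin n → ZMod 2)) (Finset.image e Finset.univ) := by
      rw [Finset.disjoint_left]
      intro a ha hb
      simp only [Finset.mem_insert, Finset.mem_singleton] at ha
      simp only [Finset.mem_image, Finset.mem_univ, true_and] at hb
      obtain ⟨i, hi⟩ := hb
      rcases ha with rfl | rfl
      · exact he0 i hi
      · exact hez i hi
    have hd2 : Disjoint (({0, z} : Finset (Fin n → ZMod 2)) ∪ Finset.image e Finset.univ)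
        (Finset.image (fun i => z + e i) Finset.univ) := by
      rw [Finset.disjoint_left]
      intro a ha hb
      simp only [Finset.mem_image, Finset.mem_univ, true_and] at hb
      obtain ⟨i, hi⟩ := hb
      have hwa : wt a = n - 1 := by rw [← hi, hcompl, hwe]
      simp only [Finset.mem_union, Finset.mem_insert, Finset.mem_singleton,
        Finset.mem_image, Finset.mem_univ, true_and] at ha
      rcases ha with (rfl | rfl) | ⟨j, rfl⟩
      · rw [wt_zero] at hwa; omega
      · rw [hwz] at hwa; omega
      · rw [hwe] at hwa; omega
    show ((({0, z} : Finset (Fin n → ZMod 2)) ∪ Finset.image e Finset.univ)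
        ∪ Finset.image (fun i => z + e i) Finset.univ).card = 2 * n + 2
    rw [Finset.card_union_of_disjoint hd2, Finset.card_union_of_disjoint hd1, hA, hB, hC]
    omega
  refine ⟨hcard, ?_⟩
  have hmem : ∀ y : Fin n → ZMod 2, y ∈ H →
      y = 0 ∨ y = z ∨ (∃ i, y = e i) ∨ (∃ i, y = z + e i) := by
    intro y hy
    simp only [H, Finset.mem_union, Finset.mem_insert, Finset.mem_singleton,
      Finset.mem_image, Finset.mem_univ, true_and] at hy
    rcases hy with ((h | h) | ⟨i, hi⟩) | ⟨i, hi⟩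
    · exact Or.inl h
    · exact Or.inr (Or.inl h)
    · exact Or.inr (Or.inr (Or.inl ⟨i, hi.symm⟩))
    · exact Or.inr (Or.inr (Or.inr ⟨i, hi.symm⟩))
  intro y hy t ht hyt
  rcases hmem y hy with rfl | rfl | ⟨i, rfl⟩ | ⟨i, rfl⟩ <;>
    rcases hmem t ht with rfl | rfl | ⟨j, rfl⟩ | ⟨j, rfl⟩
  · exact absurd rfl hyt
  · rw [zero_add, hwz]; omega
  · rw [zero_add, hwe]; omega
  · rw [zero_add, hcompl, hwe]; omega
  · rw [add_zero, hwz]; omega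
  · exact absurd rfl hyt
  · rw [hcompl, hwe]; omega
  · rw [show z + (z + e j) = e j from by rw [← add_assoc, hzz, zero_add], hwe]; omega
  · rw [add_zero, hwe]; omega
  · rw [show e i + z = z + e i from add_comm _ _, hcompl, hwe]; omega
  · have hij : i ≠ j := fun h => hyt (by rw [h])
    rw [hwp i j hij]; omega
  · rcases eq_or_ne i j with rfl | hij
    · rw [show e i + (z + e i) = z from by
        rw [← add_assoc, add_comm (e i) z, add_assoc, hee, add_zero], hwz]; omega
    · rw [show e i + (z + e j) = z + (e i + e j) from by abel, hcompl, hwp i j hij]; omega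
  · rw [add_zero, hcompl, hwe]; omega
  · rw [show z + e i + z = e i from by
      rw [add_comm, ← add_assoc, hzz, zero_add], hwe]; omega
  · rcases eq_or_ne i j with rfl | hij
    · rw [show z + e i + e i = z from by rw [add_assoc, hee, add_zero], hwz]; omega
    · rw [show z + e i + e j = z + (e i + e j) from by abel, hcompl, hwp i j hij]; omega
  · have hij : i ≠ j := by
      intro h; exact hyt (by rw [h])
    rw [show z + e i + (z + e j) = e i + e j from by
      rw [show z + e i + (z + e j) = z + z + (e i + e j) from by abel, hzz, zero_add],
      hwp i j hij]; omega
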